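/- arXiv:1709.00778 — 2 statements merged into one kernel-verified Lean document; each statement's English description precedes it below -/
import Mathlib

section
/- Let p be an odd prime, r an even positive integer, and n ≥ 1. Then A^r_{p·n} ≡ A^r_n (mod p). -/
/-- The descent set of a permutation `π` of `{1,…,n}` (realized as `Equiv.Perm (Fin n)`),
as a subset of `[n-1] = {1,…,n-1}`: those positions `i` with `π_i > π_{i+1}`. -/
def descSet (n : ℕ) (π : Equiv.Perm (Fin n)) : Finset ℕ :=
  (Finset.Icc 1 (n - 1)).filter fun i =>
    ∀ (h1 : i - 1 < n) (h2 : i < n), π ⟨i, h2⟩ < π ⟨i - 1, h1⟩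

/-- The descent set statistic `β_n(S)`: the number of permutations of `{1,…,n}`
with descent set exactly `S`. -/
def descStat (n : ℕ) (S : Finset ℕ) : ℕ :=
  (Finset.univ.filter fun π : Equiv.Perm (Fin n) => descSet n π = S).card

/-- `A^r_n = Σ_{S ⊆ [n-1]} β_n(S)^r`. -/
def powSumDes (r n : ℕ) : ℕ :=
  ∑ S ∈ (Finset.Icc 1 (n - 1)).powerset, descStat n S ^ r

open Finset

/-!
Let `α_n(S)` count the permutations whose descent set is contained in `S`; by
inclusion–exclusion, `β_n(S) = ∑_{T ⊆ S} (-1)^|S \ T| α_n(T)`. Splitting off the largest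
element `s` of `S` gives `α_n(S) = C(n, s) · α_s(S \ {s})`: a permutation with no descent after
position `s` is determined by the set of its first `s` values and the relative order of those
values. By Lucas' theorem, `α_{pn}(S) ≡ α_n(S / p) (mod p)` if all elements of `S` are
multiples of `p`, and `α_{pn}(S) ≡ 0` otherwise. Hence `β_{pn}(S) ≡ ± β_n({x | p x ∈ S})`;
for even `r` the sign disappears, and every subset of `[n-1]` arises from `2^((p-1)n)` sets `S`,
a number that is `1` modulo `p` by Fermat.
-/

namespace Finset

variable {α : Type*} [DecidableEq α]

theorem sum_powerset_neg_one_pow_card_sdiff_mul_sum_powerset {R : Type*} [CommRing R]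
    (S : Finset α) (f : Finset α → R) :
    ∑ T ∈ S.powerset, (-1) ^ #(S \ T) * ∑ U ∈ T.powerset, f U = f S := by
  induction S using Finset.induction_on generalizing f with
  | empty => simp
  | insert a S ha ih =>
    have hsdiff : ∀ T ∈ S.powerset, #(insert a S \ T) = #(S \ T) + 1 := fun T hT => by
      rw [insert_sdiff_of_notMem _ (notMem_mono (mem_powerset.1 hT) ha),
        card_insert_of_notMem (fun h => ha (mem_sdiff.1 h).1)]
    have hsdiff' : ∀ T ∈ S.powerset, insert a S \ insert a T = S \ T := fun T _ => by
      rw [insert_sdiff_insert, sdiff_insert_of_notMem ha]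
    rw [sum_powerset_insert ha, ← ih fun U => f (insert a U), ← sum_add_distrib]
    refine sum_congr rfl fun T hT => ?_
    rw [hsdiff T hT, hsdiff' T hT,
      sum_powerset_insert (notMem_mono (mem_powerset.1 hT) ha), pow_succ]
    ring

theorem sum_powerset_filter {M : Type*} [AddCommMonoid M] (P : α → Prop) [DecidablePred P]
    (I : Finset α) (f : Finset α → M) :
    ∑ S ∈ I.powerset, f (S.filter P) =
      2 ^ #(I.filter (¬ P ·)) • ∑ A ∈ (I.filter P).powerset, f A := by
  induction I using Finset.induction_on generalizing f with
  | empty => simp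
  | insert a I ha ih =>
    rw [sum_powerset_insert ha]
    by_cases hPa : P a
    · have hnotmem : a ∉ I.filter P := fun h => ha (mem_filter.1 h).1
      simp only [filter_insert, hPa, if_true, not_true_eq_false, if_false]
      rw [sum_powerset_insert hnotmem, smul_add, ← ih, ← ih]
    · simp only [filter_insert, hPa, if_true, not_false_eq_true, if_false]
      rw [card_insert_of_notMem fun h => ha (mem_filter.1 h).1, pow_succ, mul_smul, two_smul,
        smul_add, ih]

omit [DecidableEq α] in
theorem sum_powerset_image {β M : Type*} [DecidableEq β] [AddCommMonoid M] {g : α → β}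
    (hg : Function.Injective g) (s : Finset α) (f : Finset β → M) :
    ∑ B ∈ (s.image g).powerset, f B = ∑ A ∈ s.powerset, f (A.image g) := by
  rw [powerset_image, sum_image fun A _ B _ h => image_injective hg h]

end Finset

def alphaStat (n : ℕ) (S : Finset ℕ) : ℕ :=
  #{π : Equiv.Perm (Fin n) | descSet n π ⊆ S}

theorem descSet_subset_Icc (n : ℕ) (π : Equiv.Perm (Fin n)) : descSet n π ⊆ Icc 1 (n - 1) :=
  filter_subset _ _

theorem zero_notMem_descSet (n : ℕ) (π : Equiv.Perm (Fin n)) : 0 ∉ descSet n π := fun h => by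
  simpa using descSet_subset_Icc n π h

theorem lt_of_mem_descSet {n i : ℕ} {π : Equiv.Perm (Fin n)} (h : i ∈ descSet n π) :
    i < n := by
  have := mem_Icc.1 (descSet_subset_Icc n π h)
  omega

theorem succ_mem_descSet_iff {n i : ℕ} (π : Equiv.Perm (Fin n)) (h : i + 1 < n) :
    i + 1 ∈ descSet n π ↔ π ⟨i + 1, h⟩ < π ⟨i, by omega⟩ := by
  simp only [descSet, mem_filter, mem_Icc, Nat.add_sub_cancel]
  exact ⟨fun hi => hi.2 (by omega) h, fun hi => ⟨by omega, fun _ _ => hi⟩⟩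

theorem alphaStat_eq_sum_descStat (n : ℕ) (S : Finset ℕ) :
    alphaStat n S = ∑ T ∈ S.powerset, descStat n T := by
  rw [alphaStat, card_eq_sum_card_fiberwise fun π hπ => mem_powerset.2 (mem_filter.1 hπ).2]
  refine sum_congr rfl fun T hT => ?_
  rw [descStat, filter_filter]
  congr 1
  exact filter_congr fun π _ => ⟨And.right, fun h => ⟨h ▸ mem_powerset.1 hT, h⟩⟩

theorem descStat_eq_sum_alphaStat {R : Type*} [CommRing R] (n : ℕ) (S : Finset ℕ) :
    (descStat n S : R) = ∑ T ∈ S.powerset, (-1) ^ #(S \ T) * (alphaStat n T : R) := by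
  simp only [alphaStat_eq_sum_descStat, Nat.cast_sum]
  exact (sum_powerset_neg_one_pow_card_sdiff_mul_sum_powerset S fun T => (descStat n T : R)).symm

section Shuffle

variable {s m : ℕ}

theorem card_compl_fin_add {T : Finset (Fin (s + m))} (hT : #T = s) : #Tᶜ = m := by
  rw [card_compl, Fintype.card_fin, hT, Nat.add_sub_cancel_left]

def shuffle (T : {T : Finset (Fin (s + m)) // #T = s}) (σ : Equiv.Perm (Fin s)) :
    Equiv.Perm (Fin (s + m)) :=
  finSumFinEquiv.symm.trans <| (σ.sumCongr (Equiv.refl _)).trans <|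
    ((T.1.orderIsoOfFin T.2).toEquiv.sumCongr
      ((T.1ᶜ.orderIsoOfFin (card_compl_fin_add T.2)).toEquiv.trans
        (Equiv.subtypeEquivRight fun _ => mem_compl))).trans (Equiv.sumCompl (· ∈ T.1))

variable (T : {T : Finset (Fin (s + m)) // #T = s}) (σ : Equiv.Perm (Fin s))

@[simp]
theorem shuffle_castAdd (j : Fin s) :
    shuffle T σ (Fin.castAdd m j) = T.1.orderEmbOfFin T.2 (σ j) := by
  simp [shuffle]

@[simp]
theorem shuffle_natAdd (k : Fin m) :
    shuffle T σ (Fin.natAdd s k) = T.1ᶜ.orderEmbOfFin (card_compl_fin_add T.2) k := by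
  simp [shuffle]

theorem range_shuffle_comp_castAdd : Set.range (shuffle T σ ∘ Fin.castAdd m) = T.1 := by
  have h : shuffle T σ ∘ Fin.castAdd m = T.1.orderEmbOfFin T.2 ∘ σ :=
    funext (shuffle_castAdd T σ)
  rw [h, EquivLike.range_comp, range_orderEmbOfFin]

theorem mem_descSet_iff_of_comp_castAdd {π : Equiv.Perm (Fin (s + m))} {σ : Equiv.Perm (Fin s)}
    {e : Fin s → Fin (s + m)} (h : π ∘ Fin.castAdd m = e ∘ σ) (he : StrictMono e) {i : ℕ}
    (hi : i < s) : i ∈ descSet (s + m) π ↔ i ∈ descSet s σ := by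
  rcases i with _ | k
  · simp only [zero_notMem_descSet]
  · have h1 : π ⟨k + 1, by omega⟩ = e (σ ⟨k + 1, hi⟩) := congrFun h ⟨k + 1, hi⟩
    have h0 : π ⟨k, by omega⟩ = e (σ ⟨k, by omega⟩) := congrFun h ⟨k, by omega⟩
    rw [succ_mem_descSet_iff π (by omega), succ_mem_descSet_iff σ hi, h1, h0, he.lt_iff_lt]

theorem strictMono_comp_natAdd_iff (π : Equiv.Perm (Fin (s + m))) :
    StrictMono (π ∘ Fin.natAdd s) ↔ ∀ k, s + k + 1 ∉ descSet (s + m) π := by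
  cases m with
  | zero =>
    exact ⟨fun _ k hk => by have := lt_of_mem_descSet hk; omega, fun _ a => a.elim0⟩
  | succ m =>
    rw [Fin.strictMono_iff_lt_succ]
    constructor
    · intro h k hk
      have hlt := lt_of_mem_descSet hk
      rw [succ_mem_descSet_iff π hlt] at hk
      exact lt_asymm (h ⟨k, by omega⟩) hk
    · intro h k
      have hk := h k
      rw [succ_mem_descSet_iff π (by omega)] at hk
      refine lt_of_le_of_ne (not_lt.1 hk) (π.injective.ne ?_)
      simp [Fin.ext_iff]

theorem comp_sort_eq_orderEmbOfFin {α : Type*} [LinearOrder α] {k : ℕ} {w : Fin k → α}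
    (hw : Function.Injective w) (h : #(univ.image w) = k) :
    w ∘ Tuple.sort w = (univ.image w).orderEmbOfFin h :=
  orderEmbOfFin_unique h (fun _ => mem_image_of_mem w (mem_univ _))
    ((Tuple.monotone_sort w).strictMono_of_injective (hw.comp (Tuple.sort w).injective))

theorem descSet_shuffle_subset {S : Finset ℕ} (hσ : descSet s σ ⊆ S) :
    descSet (s + m) (shuffle T σ) ⊆ insert s S := by
  intro i hi
  rcases lt_trichotomy i s with hlt | rfl | hgt
  · exact mem_insert_of_mem (hσ ((mem_descSet_iff_of_comp_castAdd
      (funext (shuffle_castAdd T σ)) (orderEmbOfFin _ _).strictMono hlt).1 hi))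
  · exact mem_insert_self _ _
  · have hright : shuffle T σ ∘ Fin.natAdd s = T.1ᶜ.orderEmbOfFin (card_compl_fin_add T.2) :=
      funext (shuffle_natAdd T σ)
    obtain ⟨k, rfl⟩ : ∃ k, i = s + k + 1 := ⟨i - s - 1, by omega⟩
    exact absurd hi ((strictMono_comp_natAdd_iff _).1 (hright ▸ (orderEmbOfFin _ _).strictMono) k)

theorem shuffle_injective : Function.Injective (Function.uncurry (shuffle (s := s) (m := m))) := by
  rintro ⟨T, σ⟩ ⟨T', σ'⟩ h
  change shuffle T σ = shuffle T' σ' at h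
  obtain rfl : T = T' := Subtype.ext <| coe_injective <| by
    rw [← range_shuffle_comp_castAdd T σ, h, range_shuffle_comp_castAdd]
  refine Prod.ext rfl (Equiv.ext fun j => (T.1.orderEmbOfFin T.2).injective ?_)
  rw [← shuffle_castAdd, ← shuffle_castAdd, h]

theorem exists_shuffle_eq {S : Finset ℕ} (hS : ∀ x ∈ S, x < s) {π : Equiv.Perm (Fin (s + m))}
    (hπ : descSet (s + m) π ⊆ insert s S) :
    ∃ T σ, descSet s σ ⊆ S ∧ shuffle T σ = π := by
  set w := π ∘ Fin.castAdd m
  have hw : Function.Injective w := π.injective.comp (Fin.castAdd_injective s m)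
  have hT : #(univ.image w) = s := by
    rw [card_image_of_injective _ hw, card_univ, Fintype.card_fin]
  set T : {T : Finset (Fin (s + m)) // #T = s} := ⟨univ.image w, hT⟩
  set σ := (Tuple.sort w)⁻¹
  have hleft : w = T.1.orderEmbOfFin T.2 ∘ σ := by
    rw [← comp_sort_eq_orderEmbOfFin hw hT]
    ext j
    simp [σ]
  have hright : π ∘ Fin.natAdd s = T.1ᶜ.orderEmbOfFin (card_compl_fin_add T.2) := by
    refine orderEmbOfFin_unique _ (fun k => ?_) ((strictMono_comp_natAdd_iff π).2 fun k hk => ?_)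
    · simp only [T, mem_compl, mem_image, mem_univ, true_and, not_exists]
      intro j hj
      have := Fin.ext_iff.1 (π.injective hj)
      simp only [Fin.val_castAdd, Fin.val_natAdd] at this
      omega
    · rcases mem_insert.1 (hπ hk) with h | h
      · omega
      · have := hS _ h
        omega
  refine ⟨T, σ, fun i hi => ?_, Equiv.ext fun x => ?_⟩
  · have his := lt_of_mem_descSet hi
    rw [← mem_descSet_iff_of_comp_castAdd hleft (orderEmbOfFin _ _).strictMono his] at hi
    rcases mem_insert.1 (hπ hi) with rfl | h
    · omega
    · exact h
  · induction x using Fin.addCases with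
    | left j => rw [shuffle_castAdd]; exact (congrFun hleft j).symm
    | right k => rw [shuffle_natAdd]; exact (congrFun hright k).symm

end Shuffle

theorem alphaStat_insert {n s : ℕ} {S : Finset ℕ} (hsn : s ≤ n) (hS : ∀ x ∈ S, x < s) :
    alphaStat n (insert s S) = n.choose s * alphaStat s S := by
  obtain ⟨m, rfl⟩ := Nat.exists_eq_add_of_le hsn
  let f :
      {T : Finset (Fin (s + m)) // #T = s} × {σ : Equiv.Perm (Fin s) // descSet s σ ⊆ S} →
      {π : Equiv.Perm (Fin (s + m)) // descSet (s + m) π ⊆ insert s S} :=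
    fun x => ⟨shuffle x.1 x.2.1, descSet_shuffle_subset x.1 x.2.1 x.2.2⟩
  have hf : Function.Bijective f := by
    refine ⟨fun ⟨T, σ, _⟩ ⟨T', σ', _⟩ h => ?_, fun π => ?_⟩
    · have h' : shuffle T σ = shuffle T' σ' := congrArg Subtype.val h
      obtain ⟨rfl, rfl⟩ :=
        Prod.ext_iff.1 (shuffle_injective (a₁ := (T, σ)) (a₂ := (T', σ')) h')
      rfl
    · obtain ⟨T, σ, hσ, hT⟩ := exists_shuffle_eq hS π.2
      exact ⟨(T, ⟨σ, hσ⟩), Subtype.ext hT⟩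
  rw [alphaStat, alphaStat, ← Fintype.card_subtype, ← Fintype.card_subtype,
    ← Fintype.card_of_bijective hf, Fintype.card_prod, Fintype.card_finset_len, Fintype.card_fin]

theorem alphaStat_insert_zero (n : ℕ) (S : Finset ℕ) :
    alphaStat n (insert 0 S) = alphaStat n S := by
  simp only [alphaStat, subset_insert_iff_of_notMem (zero_notMem_descSet n _)]

theorem alphaStat_empty (n : ℕ) : alphaStat n ∅ = 1 := by
  rw [← alphaStat_insert_zero, alphaStat_insert (Nat.zero_le n) (by simp), Nat.choose_zero_right,
    one_mul]
  rfl

section Modular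

variable (p : ℕ) [hp : Fact p.Prime]

theorem cast_choose_mul_mul (a b : ℕ) :
    ((p * a).choose (p * b) : ZMod p) = (a.choose b : ZMod p) := by
  have h := Choose.choose_modEq_choose_mod_mul_choose_div_nat (p := p) (n := p * a) (k := p * b)
  rw [Nat.mul_mod_right, Nat.mul_mod_right, Nat.mul_div_cancel_left _ hp.out.pos,
    Nat.mul_div_cancel_left _ hp.out.pos, Nat.choose_self, one_mul] at h
  exact (ZMod.natCast_eq_natCast_iff _ _ _).2 h

theorem cast_choose_mul_eq_zero (a : ℕ) {c : ℕ} (hc : ¬ p ∣ c) :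
    ((p * a).choose c : ZMod p) = 0 := by
  have h := Choose.choose_modEq_choose_mod_mul_choose_div_nat (p := p) (n := p * a) (k := c)
  rw [Nat.mul_mod_right, Nat.choose_eq_zero_of_lt (Nat.pos_of_ne_zero fun h => hc
    (Nat.dvd_of_mod_eq_zero h)), zero_mul] at h
  exact (ZMod.natCast_eq_zero_iff _ _).2 (Nat.modEq_zero_iff_dvd.1 h)

theorem cast_alphaStat_mul_image_mul {n : ℕ} {B : Finset ℕ} (hB : ∀ x ∈ B, x < n) :
    (alphaStat (p * n) (B.image (p * ·)) : ZMod p) = alphaStat n B := by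
  induction B using Finset.induction_on_max generalizing n with
  | empty => simp [alphaStat_empty]
  | insert a B hlt ih =>
    have ha : a < n := hB a (mem_insert_self a B)
    have hlt' : ∀ x ∈ B.image (p * ·), x < p * a := by
      simp only [mem_image]
      rintro _ ⟨y, hy, rfl⟩
      exact Nat.mul_lt_mul_of_pos_left (hlt y hy) hp.out.pos
    rw [image_insert, alphaStat_insert (Nat.mul_le_mul_left p ha.le) hlt',
      alphaStat_insert ha.le hlt, Nat.cast_mul, Nat.cast_mul, cast_choose_mul_mul, ih hlt]

theorem cast_alphaStat_mul_eq_zero {n : ℕ} {T : Finset ℕ} (hT : ∀ x ∈ T, x < p * n)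
    (h : ∃ x ∈ T, ¬ p ∣ x) : (alphaStat (p * n) T : ZMod p) = 0 := by
  induction T using Finset.induction_on_max generalizing n with
  | empty => simp at h
  | insert a T hlt ih =>
    rw [alphaStat_insert (hT a (mem_insert_self a T)).le hlt, Nat.cast_mul]
    by_cases ha : p ∣ a
    · obtain ⟨a, rfl⟩ := ha
      obtain ⟨x, hx, hpx⟩ := h
      rcases mem_insert.1 hx with rfl | hx
      · exact absurd (dvd_mul_right p a) hpx
      · rw [ih hlt ⟨x, hx, hpx⟩, mul_zero]
    · rw [cast_choose_mul_eq_zero p n ha, zero_mul]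

theorem cast_descStat_mul {n : ℕ} {S U : Finset ℕ} (hS : ∀ x ∈ S, x < p * n)
    (hU : S.filter (p ∣ ·) = U.image (p * ·)) :
    (descStat (p * n) S : ZMod p) = (-1) ^ #(S \ U.image (p * ·)) * descStat n U := by
  have hinj : Function.Injective (p * ·) := mul_right_injective₀ hp.out.ne_zero
  have hUS : U.image (p * ·) ⊆ S := hU ▸ filter_subset _ _
  rw [descStat_eq_sum_alphaStat, descStat_eq_sum_alphaStat,
    ← sum_subset (powerset_mono.2 hUS) fun T hTS hTU => ?_]
  · rw [sum_powerset_image hinj, mul_sum]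
    refine sum_congr rfl fun B hB => ?_
    have hBU := mem_powerset.1 hB
    have hBn : ∀ x ∈ B, x < n := fun x hx =>
      Nat.lt_of_mul_lt_mul_left (hS _ (hUS (mem_image_of_mem _ (hBU hx))))
    have hcard : #(S \ B.image (p * ·)) = #(S \ U.image (p * ·)) + #(U \ B) := by
      rw [card_sdiff_of_subset ((image_subset_image hBU).trans hUS), card_sdiff_of_subset hUS,
        card_sdiff_of_subset hBU, card_image_of_injective _ hinj, card_image_of_injective _ hinj]
      have := card_le_card hBU
      have := card_le_card hUS
      rw [card_image_of_injective _ hinj] at this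
      omega
    rw [cast_alphaStat_mul_image_mul p hBn, hcard, pow_add, mul_assoc]
  · obtain ⟨x, hxT, hxU⟩ := not_subset.1 (mt mem_powerset.2 hTU)
    have hxS := mem_powerset.1 hTS hxT
    rw [cast_alphaStat_mul_eq_zero p (fun y hy => hS y (mem_powerset.1 hTS hy))
      ⟨x, hxT, fun hpx => hxU (hU ▸ mem_filter.2 ⟨hxS, hpx⟩)⟩, mul_zero]

end Modular

theorem image_mul_image_div_filter_dvd {p : ℕ} (S : Finset ℕ) :
    ((S.filter (p ∣ ·)).image (· / p)).image (p * ·) = S.filter (p ∣ ·) := by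
  rw [image_image]
  exact (image_congr fun x hx => Nat.mul_div_cancel' (mem_filter.1 hx).2).trans image_id

theorem filter_dvd_Icc_mul {p : ℕ} (hp : 0 < p) (n : ℕ) :
    (Icc 1 (p * n - 1)).filter (p ∣ ·) = (Icc 1 (n - 1)).image (p * ·) := by
  ext x
  simp only [mem_filter, mem_Icc, mem_image]
  constructor
  · rintro ⟨hx, a, rfl⟩
    have ha0 : a ≠ 0 := by rintro rfl; omega
    have han : a < n := Nat.lt_of_mul_lt_mul_left (a := p) (by omega)
    exact ⟨a, ⟨by omega, by omega⟩, rfl⟩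
  · rintro ⟨a, ha, rfl⟩
    have h1 : 0 < p * a := Nat.mul_pos hp (by omega)
    have h2 : p * a < p * n := Nat.mul_lt_mul_of_pos_left (by omega) hp
    exact ⟨⟨by omega, by omega⟩, dvd_mul_right p a⟩

theorem card_filter_not_dvd_Icc_mul {p : ℕ} (hp : 0 < p) (n : ℕ) :
    #((Icc 1 (p * n - 1)).filter (¬ p ∣ ·)) = (p - 1) * n := by
  have h := card_filter_add_card_filter_not (s := Icc 1 (p * n - 1)) (p := (p ∣ ·))
  rw [filter_dvd_Icc_mul hp, card_image_of_injective _ (mul_right_injective₀ hp.ne'),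
    Nat.card_Icc, Nat.card_Icc] at h
  rcases Nat.eq_zero_or_pos n with rfl | hn
  · simp
  have : n ≤ p * n := Nat.le_mul_of_pos_left n hp
  rw [Nat.sub_one_mul]
  generalize p * n = N at h this ⊢
  omega

theorem stmt6_general (p r n : ℕ) (hp : p.Prime) (hodd : Odd p)
    (hre : Even r) :
    powSumDes r (p * n) ≡ powSumDes r n [MOD p] := by
  have := Fact.mk hp
  have h2 : (2 : ZMod p) ≠ 0 := Ring.two_ne_zero <| by
    rw [ZMod.ringChar_zmod_n]
    rintro rfl
    exact absurd hodd (by decide)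
  rw [← ZMod.natCast_eq_natCast_iff, powSumDes, powSumDes]
  push_cast
  have hterm : ∀ S ∈ (Icc 1 (p * n - 1)).powerset, (descStat (p * n) S : ZMod p) ^ r =
      (descStat n ((S.filter (p ∣ ·)).image (· / p)) : ZMod p) ^ r := fun S hS => by
    have hS : ∀ x ∈ S, x < p * n := fun x hx => by
      have := mem_Icc.1 (mem_powerset.1 hS hx)
      omega
    rw [cast_descStat_mul p hS (image_mul_image_div_filter_dvd S).symm, mul_pow, ← pow_mul,
      (hre.mul_left _).neg_one_pow, one_mul]
  rw [sum_congr rfl hterm,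
    sum_powerset_filter (p ∣ ·) _ fun A => (descStat n (A.image (· / p)) : ZMod p) ^ r,
    card_filter_not_dvd_Icc_mul hp.pos, filter_dvd_Icc_mul hp.pos,
    sum_powerset_image (mul_right_injective₀ hp.ne_zero), nsmul_eq_mul, Nat.cast_pow, pow_mul,
    Nat.cast_ofNat, ZMod.pow_card_sub_one_eq_one h2, one_pow, one_mul]
  refine sum_congr rfl fun B _ => ?_
  simp [image_image, Function.comp_def, Nat.mul_div_cancel_left _ hp.pos]

theorem stmt6 (p r n : ℕ) (hp : p.Prime) (hodd : Odd p)
    (hr : 0 < r) (hre : Even r) (hn : 1 ≤ n) :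
    powSumDes r (p * n) ≡ powSumDes r n [MOD p] :=
  stmt6_general p r n hp hodd hre
end

section
/- Let r be a positive integer and n ≥ 1 with d_2(n) > 0. Then v_2(A^r_n) ≥ r − u_2(r) + n − 1 − r · d_2(n), as an inequality of integers, where v_2 denotes the 2-adic valuation; that is, A^r_n contains at least r − u_2(r) + n − 1 − r·d_2(n) factors of 2. -/
/-- `u_p(m)`, the sum of the digits of `m` in base `p`. -/
def digitSum (p m : ℕ) : ℕ := (Nat.digits p m).sum

/-- `d_p(m) = u_p(m) - 1`, the depth of `m` in base `p`. -/
def depth (p m : ℕ) : ℕ := digitSum p m - 1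

/-!
Let `α_n(V)` count the permutations whose descent set lies in `V`. Splitting a permutation after
the largest `v ∈ V` gives `α_n(V) = C(n, v) · α_v(V \ {v})`, so Kummer's theorem yields
`2^|V| ∣ 2^{d_2(n)} α_n(V)`. Möbius inversion writes `β_n(S) = Σ_{V ⊆ S} (-1)^|S \ V| α_n(V)`,
and expanding `(-1)^|S \ V| = ∏_{i ∈ S \ V} (1 - 2)` multilinearly in the indicator of `S`
gives `β_n(S) = Σ_{T ⊆ S} c(T)` with `c(T) = Σ_{V ⊆ T} (-2)^|T \ V| α_n(V)`, so that
`2^|T| ∣ 2^{d_2(n)} c(T)`.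

Raising `Σ_{T ⊆ S} c(T)` to the `r`-th power by the multinomial theorem and summing over `S`, a
monomial `∏ c(T)^{k_T}` is counted once for each of the `2^{n-1-|⋃ T|}` sets `S` containing all
`T` with `k_T ≠ 0`, with the multinomial coefficient, whose `2`-adic valuation is
`Σ u_2(k_T) - u_2(r)`. Adding up these powers of `2` term by term gives the bound.
-/

open Finset Equiv
open scoped Nat

lemma digitSum_two_pos {m : ℕ} (hm : m ≠ 0) : 0 < digitSum 2 m :=
  (Nat.pos_of_ne_zero (Nat.getLast_digit_ne_zero 2 hm)).trans_le
    (List.le_sum_of_mem (List.getLast_mem _))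

lemma digitSum_two_le (m : ℕ) : digitSum 2 m ≤ m := Nat.digit_sum_le 2 m

lemma padicValNat_two_factorial (m : ℕ) : padicValNat 2 m ! = m - digitSum 2 m := by
  simpa [digitSum] using sub_one_mul_padicValNat_factorial (p := 2) m

lemma padicValNat_two_add_choose_add_digitSum (a b : ℕ) :
    padicValNat 2 ((a + b).choose a) + digitSum 2 (a + b) = digitSum 2 a + digitSum 2 b := by
  have hC := (Nat.choose_pos (Nat.le_add_right a b)).ne'
  have h := congrArg (padicValNat 2) (Nat.add_choose_mul_factorial_mul_factorial b a)
  rw [add_comm b a, padicValNat.mul (mul_ne_zero hC b.factorial_ne_zero) a.factorial_ne_zero,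
    padicValNat.mul hC b.factorial_ne_zero, padicValNat_two_factorial, padicValNat_two_factorial,
    padicValNat_two_factorial] at h
  have := digitSum_two_le a
  have := digitSum_two_le b
  have := digitSum_two_le (a + b)
  omega

lemma padicValNat_two_multinomial_add_digitSum {ι : Type*} [DecidableEq ι] (s : Finset ι)
    (k : ι → ℕ) :
    padicValNat 2 (Nat.multinomial s k) + digitSum 2 (∑ i ∈ s, k i) =
      ∑ i ∈ s, digitSum 2 (k i) := by
  induction s using Finset.induction_on with
  | empty => simp [digitSum]
  | insert a s ha ih =>
    have h := padicValNat_two_add_choose_add_digitSum (k a) (∑ i ∈ s, k i)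
    rw [Nat.multinomial_insert ha, padicValNat.mul (Nat.choose_pos (by omega)).ne'
      (Nat.multinomial_pos s k).ne', sum_insert ha, sum_insert ha]
    omega

lemma add_le_digitSum_two_add_mul_max {k : ℕ} (hk : k ≠ 0) (c : ℕ) :
    k + c ≤ digitSum 2 k + k * max c 1 := by
  have hu := digitSum_two_pos hk
  rcases Nat.eq_zero_or_pos c with rfl | hc
  · simp
  · have : 1 ≤ k := Nat.one_le_iff_ne_zero.2 hk
    rw [max_eq_left hc]
    nlinarith

section Powerset

variable {ι R : Type*} [DecidableEq ι]

lemma sum_powerset_sum_powerset_pow_mul_pow [CommSemiring R] (a b : R) (F : Finset ι → R)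
    (S : Finset ι) :
    ∑ T ∈ S.powerset, ∑ V ∈ T.powerset, a ^ #(T \ V) * b ^ #(S \ T) * F V =
      ∑ V ∈ S.powerset, (a + b) ^ #(S \ V) * F V := by
  rw [sum_comm' (t' := S.powerset) (s' := fun V => Icc V S) fun T V => by
    simp only [mem_powerset, mem_Icc]
    exact ⟨fun h => ⟨⟨h.2, h.1⟩, h.2.trans h.1⟩, fun h => ⟨h.1.2, h.1.1⟩⟩]
  refine sum_congr rfl fun V hV => ?_
  have hdisj : ∀ W ∈ (S \ V).powerset, Disjoint V W :=
    fun W hW => disjoint_sdiff.mono_right (mem_powerset.1 hW)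
  rw [Icc_eq_image_powerset (mem_powerset.1 hV), ← sum_pow_mul_eq_add_pow, sum_mul,
    sum_image fun W₁ h₁ W₂ h₂ h => by
      rw [← union_sdiff_cancel_left (hdisj W₁ h₁), ← union_sdiff_cancel_left (hdisj W₂ h₂),
        h]]
  refine sum_congr rfl fun W hW => ?_
  have hS : S \ (V ∪ W) = (S \ V) \ W := sdiff_sdiff_left.symm
  rw [union_sdiff_cancel_left (hdisj W hW), hS, card_sdiff_of_subset (mem_powerset.1 hW)]

lemma sum_powerset_neg_one_pow_mul_sum_powerset [CommRing R] (f : Finset ι → R) (S : Finset ι) :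
    ∑ V ∈ S.powerset, (-1) ^ #(S \ V) * ∑ U ∈ V.powerset, f U = f S := by
  have h := sum_powerset_sum_powerset_pow_mul_pow (1 : R) (-1) f S
  simp only [one_pow, one_mul, ← mul_sum, add_neg_cancel] at h
  rw [h, sum_eq_single_of_mem S (mem_powerset_self S) fun V hV hne => ?_]
  · simp
  · rw [zero_pow (card_ne_zero.2 (sdiff_nonempty.2 fun hSV =>
      hne ((mem_powerset.1 hV).antisymm hSV))), zero_mul]

def supportUnion (P : Finset (Finset ι)) (k : Finset ι → ℕ) : Finset ι :=
  (P.filter (k · ≠ 0)).biUnion id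

lemma supportUnion_subset_iff {P : Finset (Finset ι)} {k : Finset ι → ℕ} {S : Finset ι} :
    supportUnion P k ⊆ S ↔ ∀ T ∈ P, k T ≠ 0 → T ⊆ S := by
  simp [supportUnion]

lemma supportUnion_powerset_subset {I : Finset ι} (k : Finset ι → ℕ) :
    supportUnion I.powerset k ⊆ I :=
  supportUnion_subset_iff.2 fun _ hT _ => mem_powerset.1 hT

lemma sum_powerset_pow_sum_powerset [CommSemiring R] (γ : Finset ι → R) (I : Finset ι)
    (r : ℕ) :
    ∑ S ∈ I.powerset, (∑ T ∈ S.powerset, γ T) ^ r =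
      ∑ k ∈ piAntidiag I.powerset r, 2 ^ (#I - #(supportUnion I.powerset k)) *
        (Nat.multinomial I.powerset k * ∏ T ∈ I.powerset, γ T ^ k T) := by
  have hrestrict : ∀ S ∈ I.powerset,
      ∑ T ∈ S.powerset, γ T = ∑ T ∈ I.powerset, if T ⊆ S then γ T else 0 := by
    intro S hS
    rw [← sum_filter]
    congr 1
    ext T
    simp only [mem_filter, mem_powerset]
    exact ⟨fun h => ⟨h.trans (mem_powerset.1 hS), h⟩, And.right⟩
  have hprod : ∀ (S : Finset ι) (k : Finset ι → ℕ),
      ∏ T ∈ I.powerset, (if T ⊆ S then γ T else 0) ^ k T =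
        if supportUnion I.powerset k ⊆ S then ∏ T ∈ I.powerset, γ T ^ k T else 0 := by
    intro S k
    have hpow : ∀ T, (if T ⊆ S then γ T else 0) ^ k T =
        if (k T ≠ 0 → T ⊆ S) then γ T ^ k T else 0 := by
      intro T
      by_cases hT : T ⊆ S
      · simp [hT]
      · by_cases hk : k T = 0 <;> simp [hT, hk]
    simp_rw [hpow, prod_ite_zero, supportUnion_subset_iff]
  rw [sum_congr rfl fun S hS => by rw [hrestrict S hS, sum_pow_eq_sum_piAntidiag], sum_comm]
  refine sum_congr rfl fun k _ => ?_
  simp_rw [hprod, mul_ite, mul_zero]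
  rw [← sum_filter, sum_const, nsmul_eq_mul]
  have hcard : I.powerset.filter (supportUnion I.powerset k ⊆ ·) =
      Icc (supportUnion I.powerset k) I := by
    ext S
    simp only [mem_filter, mem_powerset, mem_Icc]
    exact and_comm
  rw [hcard, card_Icc_finset (supportUnion_powerset_subset k)]
  push_cast
  ring

lemma two_pow_dvd_sum_powerset_pow_sum_powerset (γ : Finset ι → ℤ) (I : Finset ι) (r : ℕ)
    (hγ : ∀ T ⊆ I, 2 ^ max #T 1 ∣ γ T) :
    2 ^ (r - digitSum 2 r + #I) ∣ ∑ S ∈ I.powerset, (∑ T ∈ S.powerset, γ T) ^ r := by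
  rw [sum_powerset_pow_sum_powerset]
  refine dvd_sum fun k hk => ?_
  set P := I.powerset
  set U := supportUnion P k
  set v := padicValNat 2 (Nat.multinomial P k)
  have hsum : ∑ T ∈ P, k T = r := (mem_piAntidiag.1 hk).1
  have hprod : (2 : ℤ) ^ (∑ T ∈ P, k T * max #T 1) ∣ ∏ T ∈ P, γ T ^ k T := by
    rw [← prod_pow_eq_pow_sum]
    exact prod_dvd_prod_of_dvd _ _ fun T hT => by
      rw [pow_mul']
      exact pow_dvd_pow_of_dvd (hγ T (mem_powerset.1 hT)) _
  have hmult : (2 : ℤ) ^ v ∣ Nat.multinomial P k := by exact_mod_cast pow_padicValNat_dvd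
  have hU : #U ≤ ∑ T ∈ P, if k T ≠ 0 then #T else 0 := by
    rw [← sum_filter]
    exact card_biUnion_le
  have hterm : ∑ T ∈ P, (k T + if k T ≠ 0 then #T else 0) ≤
      ∑ T ∈ P, (digitSum 2 (k T) + k T * max #T 1) := by
    refine sum_le_sum fun T _ => ?_
    split_ifs with h
    · exact add_le_digitSum_two_add_mul_max h _
    · simp [not_not.1 h]
  have hv : v + digitSum 2 (∑ T ∈ P, k T) = ∑ T ∈ P, digitSum 2 (k T) :=
    padicValNat_two_multinomial_add_digitSum P k
  have hUI : #U ≤ #I := card_le_card (supportUnion_powerset_subset k)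
  have hr := digitSum_two_le r
  rw [sum_add_distrib, sum_add_distrib] at hterm
  rw [hsum] at hv hterm
  have hexp : r - digitSum 2 r + #I ≤ #I - #U + (v + ∑ T ∈ P, k T * max #T 1) := by omega
  refine (pow_dvd_pow 2 hexp).trans ?_
  rw [pow_add, pow_add]
  exact mul_dvd_mul_left _ (mul_dvd_mul hmult hprod)

end Powerset

section Descents

variable {n : ℕ}

lemma mem_descSet {π : Perm (Fin n)} {i : ℕ} :
    i ∈ descSet n π ↔ 1 ≤ i ∧ ∃ h : i < n, π ⟨i, h⟩ < π ⟨i - 1, by omega⟩ := by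
  simp only [descSet, mem_filter, mem_Icc]
  constructor
  · rintro ⟨⟨h1, h2⟩, h⟩
    exact ⟨h1, by omega, h (by omega) (by omega)⟩
  · rintro ⟨h1, h2, h⟩
    exact ⟨⟨h1, by omega⟩, fun _ _ => h⟩

lemma succ_mem_descSet {π : Perm (Fin n)} {i : ℕ} (hi : i + 1 < n) :
    i + 1 ∈ descSet n π ↔ π ⟨i + 1, hi⟩ < π ⟨i, by omega⟩ := by
  simp [mem_descSet, hi]

lemma descSet_one : descSet n 1 = ∅ := by
  ext i
  simp only [mem_descSet, Perm.one_apply, Fin.mk_lt_mk, notMem_empty, iff_false]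
  omega

lemma lt_succ_of_descSet_subset {π : Perm (Fin n)} {V : Finset ℕ} (h : descSet n π ⊆ V)
    {c : ℕ} (hc : c + 1 < n) (hcV : c + 1 ∉ V) : π ⟨c, by omega⟩ < π ⟨c + 1, hc⟩ :=
  not_le.1 fun hle => hcV <| h <| (succ_mem_descSet hc).2 <|
    hle.lt_of_ne fun he => by simpa using π.injective he

lemma lt_of_descSet_subset {π : Perm (Fin n)} {V : Finset ℕ} {v : ℕ} (h : descSet n π ⊆ V)
    (hV : ∀ x ∈ V, x ≤ v) {a b : ℕ} (ha : v ≤ a) (hab : a < b) (hb : b < n) :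
    π ⟨a, by omega⟩ < π ⟨b, hb⟩ := by
  have hstep : ∀ c, v ≤ c → (hc : c + 1 < n) →
      π ⟨c, Nat.lt_of_succ_lt hc⟩ < π ⟨c + 1, hc⟩ :=
    fun c hvc hc => lt_succ_of_descSet_subset h hc fun hcV => by have := hV _ hcV; omega
  induction b, hab using Nat.le_induction with
  | base => exact hstep a ha hb
  | succ c hac ih => exact (ih (by omega)).trans (hstep c (by omega) hb)

def descSubsetStat (n : ℕ) (V : Finset ℕ) : ℕ :=
  #{π : Perm (Fin n) | descSet n π ⊆ V}

lemma descSubsetStat_pos (n : ℕ) (V : Finset ℕ) : 0 < descSubsetStat n V :=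
  card_pos.2 ⟨1, mem_filter.2 ⟨mem_univ _, descSet_one ▸ empty_subset V⟩⟩

lemma descSubsetStat_eq_sum_descStat (n : ℕ) (V : Finset ℕ) :
    descSubsetStat n V = ∑ U ∈ V.powerset, descStat n U := by
  rw [descSubsetStat, card_eq_sum_card_fiberwise (f := descSet n) (t := V.powerset)
    fun π hπ => mem_powerset.2 (mem_filter.1 hπ).2]
  refine sum_congr rfl fun U hU => ?_
  rw [descStat, filter_filter]
  congr 1
  exact filter_congr fun π _ => ⟨And.right, fun h => ⟨h ▸ mem_powerset.1 hU, h⟩⟩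

end Descents

section Glue

variable {n v : ℕ}

lemma card_compl_of_card_eq {W : Finset (Fin n)} (hW : #W = v) : #Wᶜ = n - v := by
  rw [card_compl, hW, Fintype.card_fin]

def glueFun (W : Finset (Fin n)) (hW : #W = v) (σ : Perm (Fin v)) (j : Fin n) : Fin n :=
  if h : (j : ℕ) < v then W.orderEmbOfFin hW (σ ⟨j, h⟩)
  else Wᶜ.orderEmbOfFin (card_compl_of_card_eq hW) ⟨j - v, by omega⟩

variable {W : Finset (Fin n)} {hW : #W = v} {σ : Perm (Fin v)}

lemma glueFun_of_lt {j : Fin n} (h : (j : ℕ) < v) :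
    glueFun W hW σ j = W.orderEmbOfFin hW (σ ⟨j, h⟩) := dif_pos h

lemma glueFun_of_not_lt {j : Fin n} (h : ¬(j : ℕ) < v) :
    glueFun W hW σ j = Wᶜ.orderEmbOfFin (card_compl_of_card_eq hW) ⟨j - v, by omega⟩ :=
  dif_neg h

lemma glueFun_mem_iff (j : Fin n) : glueFun W hW σ j ∈ W ↔ (j : ℕ) < v := by
  by_cases h : (j : ℕ) < v
  · simp only [glueFun_of_lt h, orderEmbOfFin_mem, h]
  · simp only [glueFun_of_not_lt h, h, iff_false]
    exact mem_compl.1 (orderEmbOfFin_mem _ _ _)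

lemma glueFun_injective : Function.Injective (glueFun W hW σ) := by
  intro x y hxy
  have hmem := glueFun_mem_iff (hW := hW) (σ := σ) x
  rw [hxy, glueFun_mem_iff] at hmem
  by_cases hx : (x : ℕ) < v
  · have hy := hmem.2 hx
    rw [glueFun_of_lt hx, glueFun_of_lt hy] at hxy
    simpa [Fin.ext_iff] using σ.injective ((W.orderEmbOfFin hW).injective hxy)
  · have hy := mt hmem.1 hx
    rw [glueFun_of_not_lt hx, glueFun_of_not_lt hy] at hxy
    have := congrArg Fin.val ((Wᶜ.orderEmbOfFin _).injective hxy)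
    simp only at this
    omega

variable (W hW σ) in
noncomputable def glue : Perm (Fin n) :=
  Equiv.ofBijective _ (Finite.injective_iff_bijective.1 (glueFun_injective (hW := hW) (σ := σ)))

lemma glue_apply (j : Fin n) : glue W hW σ j = glueFun W hW σ j := rfl

lemma descSet_glue_subset {V : Finset ℕ} (hvV : v ∈ V) (hσ : descSet v σ ⊆ V.erase v) :
    descSet n (glue W hW σ) ⊆ V := by
  intro i hi
  obtain ⟨h1, h2, hlt⟩ := mem_descSet.1 hi
  rcases lt_trichotomy i v with hiv | rfl | hvi
  · have hi1v : i - 1 < v := by omega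
    rw [glue_apply, glue_apply, glueFun_of_lt hiv, glueFun_of_lt hi1v,
      OrderEmbedding.lt_iff_lt] at hlt
    exact erase_subset _ _ (hσ (mem_descSet.2 ⟨h1, hiv, hlt⟩))
  · exact hvV
  · rw [glue_apply, glue_apply, glueFun_of_not_lt (by simp; omega),
      glueFun_of_not_lt (by simp; omega), OrderEmbedding.lt_iff_lt, Fin.mk_lt_mk] at hlt
    simp only at hlt
    omega

variable (hv : v ≤ n)

def prefixImage (π : Perm (Fin n)) : Finset (Fin n) :=
  univ.image fun j : Fin v => π (Fin.castLE hv j)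

lemma card_prefixImage (π : Perm (Fin n)) : #(prefixImage hv π) = v := by
  rw [prefixImage, card_image_of_injective _ fun _ _ hab =>
    Fin.castLE_injective hv (π.injective hab), card_univ, Fintype.card_fin]

lemma mem_prefixImage (π : Perm (Fin n)) (j : Fin v) :
    π (Fin.castLE hv j) ∈ prefixImage hv π :=
  mem_image_of_mem _ (mem_univ j)

noncomputable def prefixPattern (π : Perm (Fin n)) : Perm (Fin v) :=
  Equiv.ofBijective
    (fun j => ((prefixImage hv π).orderIsoOfFin (card_prefixImage hv π)).symm
      ⟨π (Fin.castLE hv j), mem_prefixImage hv π j⟩)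
    (Finite.injective_iff_bijective.1 fun _ _ hab => Fin.castLE_injective hv
      (π.injective (congrArg Subtype.val (OrderIso.injective _ hab))))

lemma orderEmbOfFin_prefixPattern (π : Perm (Fin n)) (j : Fin v) :
    (prefixImage hv π).orderEmbOfFin (card_prefixImage hv π) (prefixPattern hv π j) =
      π (Fin.castLE hv j) := by
  rw [← coe_orderIsoOfFin_apply, prefixPattern, Equiv.ofBijective_apply,
    OrderIso.apply_symm_apply]

lemma descSet_prefixPattern_subset {V : Finset ℕ} {π : Perm (Fin n)} (hπ : descSet n π ⊆ V) :
    descSet v (prefixPattern hv π) ⊆ V.erase v := by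
  intro i hi
  obtain ⟨h1, h2, hlt⟩ := mem_descSet.1 hi
  rw [← ((prefixImage hv π).orderEmbOfFin (card_prefixImage hv π)).lt_iff_lt,
    orderEmbOfFin_prefixPattern, orderEmbOfFin_prefixPattern] at hlt
  exact mem_erase.2 ⟨h2.ne, hπ (mem_descSet.2 ⟨h1, by omega, hlt⟩)⟩

lemma glue_prefixPattern {V : Finset ℕ} (hV : ∀ x ∈ V, x ≤ v) {π : Perm (Fin n)}
    (hπ : descSet n π ⊆ V) :
    glue (prefixImage hv π) (card_prefixImage hv π) (prefixPattern hv π) = π := by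
  refine Equiv.ext fun j => ?_
  rw [glue_apply]
  by_cases h : (j : ℕ) < v
  · rw [glueFun_of_lt h, orderEmbOfFin_prefixPattern]
    rfl
  · rw [glueFun_of_not_lt h]
    -- the values of `π` after position `v` increase, so they enumerate the complement in order
    have htail : (fun t : Fin (n - v) => π ⟨v + t, by omega⟩) =
        (prefixImage hv π)ᶜ.orderEmbOfFin (card_compl_of_card_eq (card_prefixImage hv π)) := by
      refine orderEmbOfFin_unique _ (fun t => mem_compl.2 fun hmem => ?_) fun a b hab =>
        lt_of_descSet_subset hπ hV (by omega) (by simpa using hab) _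
      obtain ⟨j', -, hj'⟩ := mem_image.1 hmem
      have := congrArg Fin.val (π.injective hj')
      simp only [Fin.val_castLE] at this
      omega
    rw [← htail]
    exact congrArg π (Fin.ext (by simp; omega))

lemma prefixImage_glue (W : Finset (Fin n)) (hW : #W = v) (σ : Perm (Fin v)) :
    prefixImage hv (glue W hW σ) = W := by
  ext x
  simp only [prefixImage, mem_image, mem_univ, true_and]
  constructor
  · rintro ⟨j, rfl⟩
    exact (glueFun_mem_iff _).2 j.2
  · intro hx
    obtain ⟨i, rfl⟩ : x ∈ Set.range (W.orderEmbOfFin hW) := by rwa [range_orderEmbOfFin]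
    refine ⟨σ.symm i, ?_⟩
    rw [glue_apply, glueFun_of_lt (by simp)]
    simp

lemma prefixPattern_glue (W : Finset (Fin n)) (hW : #W = v) (σ : Perm (Fin v)) :
    prefixPattern hv (glue W hW σ) = σ := by
  refine Equiv.ext fun j => ?_
  have hemb : (W.orderEmbOfFin hW : Fin v → Fin n) =
      (prefixImage hv (glue W hW σ)).orderEmbOfFin (card_prefixImage hv _) :=
    orderEmbOfFin_unique _ (fun x => by rw [prefixImage_glue]; exact orderEmbOfFin_mem _ _ _)
      (W.orderEmbOfFin hW).strictMono
  apply ((prefixImage hv (glue W hW σ)).orderEmbOfFin (card_prefixImage hv _)).injective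
  rw [orderEmbOfFin_prefixPattern, glue_apply, glueFun_of_lt (by simp), ← congrFun hemb]
  rfl

end Glue

lemma descSubsetStat_eq_choose_mul {n v : ℕ} {V : Finset ℕ} (hvn : v ≤ n) (hvV : v ∈ V)
    (hV : ∀ x ∈ V, x ≤ v) :
    descSubsetStat n V = n.choose v * descSubsetStat v (V.erase v) := by
  let e : {π // descSet n π ⊆ V} ≃
      {W : Finset (Fin n) // #W = v} × {σ : Perm (Fin v) // descSet v σ ⊆ V.erase v} :=
    { toFun := fun π => (⟨prefixImage hvn π, card_prefixImage hvn π⟩,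
        ⟨prefixPattern hvn π, descSet_prefixPattern_subset hvn π.2⟩)
      invFun := fun p => ⟨glue p.1.1 p.1.2 p.2.1, descSet_glue_subset hvV p.2.2⟩
      left_inv := fun π => Subtype.ext (glue_prefixPattern hvn hV π.2)
      right_inv := fun p => Prod.ext (Subtype.ext (prefixImage_glue hvn _ _ _))
        (Subtype.ext (prefixPattern_glue hvn _ _ _)) }
  have := Fintype.card_congr e
  rwa [Fintype.card_prod, Fintype.card_finset_len, Fintype.card_fin, Fintype.card_subtype,
    Fintype.card_subtype] at this

lemma card_le_padicValNat_descSubsetStat_add_depth {n : ℕ} {V : Finset ℕ}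
    (hV : V ⊆ Icc 1 (n - 1)) : #V ≤ padicValNat 2 (descSubsetStat n V) + depth 2 n := by
  induction n using Nat.strong_induction_on generalizing V with
  | _ n ih =>
    rcases V.eq_empty_or_nonempty with rfl | hne
    · simp
    set v := V.max' hne
    have hvV : v ∈ V := V.max'_mem hne
    have hmax : ∀ x ∈ V, x ≤ v := fun x hx => V.le_max' x hx
    have hv := mem_Icc.1 (hV hvV)
    have hV' : V.erase v ⊆ Icc 1 (v - 1) := fun x hx => by
      have hxv := lt_of_le_of_ne (hmax x (mem_of_mem_erase hx)) (ne_of_mem_erase hx)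
      exact mem_Icc.2 ⟨(mem_Icc.1 (hV (mem_of_mem_erase hx))).1, by omega⟩
    have hIH := ih v (by omega) hV'
    have hchoose := padicValNat_two_add_choose_add_digitSum v (n - v)
    rw [Nat.add_sub_cancel' (by omega)] at hchoose
    rw [descSubsetStat_eq_choose_mul (by omega) hvV hmax,
      padicValNat.mul (Nat.choose_pos (by omega)).ne' (descSubsetStat_pos _ _).ne']
    have := card_erase_of_mem hvV
    have := card_pos.2 hne
    have := digitSum_two_pos (show n - v ≠ 0 by omega)
    have := digitSum_two_pos (show v ≠ 0 by omega)
    simp only [depth] at hIH ⊢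
    omega

lemma two_pow_card_dvd_descSubsetStat {n : ℕ} {V : Finset ℕ} (hV : V ⊆ Icc 1 (n - 1)) :
    (2 : ℤ) ^ #V ∣ 2 ^ depth 2 n * descSubsetStat n V := by
  have hdvd : (2 : ℤ) ^ padicValNat 2 (descSubsetStat n V) ∣ descSubsetStat n V := by
    exact_mod_cast pow_padicValNat_dvd
  refine (pow_dvd_pow 2 ?_).trans (pow_add (2 : ℤ) _ _ ▸ mul_dvd_mul_left _ hdvd)
  have := card_le_padicValNat_descSubsetStat_add_depth hV
  omega

def descCoeff (n : ℕ) (T : Finset ℕ) : ℤ :=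
  ∑ V ∈ T.powerset, (-2) ^ #(T \ V) * descSubsetStat n V

lemma descStat_eq_sum_descCoeff (n : ℕ) (S : Finset ℕ) :
    (descStat n S : ℤ) = ∑ T ∈ S.powerset, descCoeff n T := by
  calc (descStat n S : ℤ)
      = ∑ V ∈ S.powerset, (-1) ^ #(S \ V) * ∑ U ∈ V.powerset, (descStat n U : ℤ) :=
        (sum_powerset_neg_one_pow_mul_sum_powerset (fun U => (descStat n U : ℤ)) S).symm
    _ = ∑ V ∈ S.powerset, (-2 + 1) ^ #(S \ V) * (descSubsetStat n V : ℤ) := by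
        norm_num [descSubsetStat_eq_sum_descStat]
    _ = ∑ T ∈ S.powerset, descCoeff n T := by
        rw [← sum_powerset_sum_powerset_pow_mul_pow]
        simp [descCoeff]

lemma two_pow_card_dvd_descCoeff {n : ℕ} {T : Finset ℕ} (hT : T ⊆ Icc 1 (n - 1)) :
    (2 : ℤ) ^ #T ∣ 2 ^ depth 2 n * descCoeff n T := by
  rw [descCoeff, mul_sum]
  refine dvd_sum fun V hV => ?_
  have hVT := mem_powerset.1 hV
  calc (2 : ℤ) ^ #T = 2 ^ #(T \ V) * 2 ^ #V := by
        rw [← pow_add, card_sdiff_add_card_eq_card hVT]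
    _ ∣ (-2) ^ #(T \ V) * (2 ^ depth 2 n * descSubsetStat n V) :=
      mul_dvd_mul (pow_dvd_pow_of_dvd (dvd_neg.2 dvd_rfl) _)
        (two_pow_card_dvd_descSubsetStat (hVT.trans hT))
    _ = 2 ^ depth 2 n * ((-2) ^ #(T \ V) * descSubsetStat n V) := by ring

lemma two_pow_max_card_one_dvd_descCoeff {n : ℕ} (hd : 0 < depth 2 n) {T : Finset ℕ}
    (hT : T ⊆ Icc 1 (n - 1)) : (2 : ℤ) ^ max #T 1 ∣ 2 ^ depth 2 n * descCoeff n T := by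
  rcases Nat.eq_zero_or_pos #T with h | h
  · rw [h, max_eq_right zero_le_one, pow_one]
    exact (dvd_pow_self 2 hd.ne').mul_right _
  · rw [max_eq_left h]
    exact two_pow_card_dvd_descCoeff hT

lemma powSumDes_pos (r n : ℕ) : 0 < powSumDes r n :=
  (pow_pos (card_pos.2 ⟨1, mem_filter.2 ⟨mem_univ _, descSet_one⟩⟩) r).trans_le
    (single_le_sum (f := fun S => descStat n S ^ r) (fun _ _ => Nat.zero_le _)
      (empty_mem_powerset _))

theorem stmt16_general (r n : ℕ) (hd : 0 < depth 2 n) :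
    (r : ℤ) - digitSum 2 r + n - 1 - r * depth 2 n ≤
      padicValNat 2 (powSumDes r n) := by
  have hn : n ≠ 0 := by
    rintro rfl
    simp [depth, digitSum] at hd
  have hdvd : (2 : ℤ) ^ (r - digitSum 2 r + (n - 1)) ∣ 2 ^ (depth 2 n * r) * powSumDes r n := by
    have := two_pow_dvd_sum_powerset_pow_sum_powerset _ (Icc 1 (n - 1)) r
      fun T hT => two_pow_max_card_one_dvd_descCoeff hd hT
    simp_rw [← mul_sum, ← descStat_eq_sum_descCoeff, mul_pow, ← pow_mul, ← mul_sum,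
      Nat.card_Icc, Nat.add_sub_cancel] at this
    simpa [powSumDes] using this
  have hprod : 2 ^ (depth 2 n * r) * powSumDes r n ≠ 0 :=
    mul_ne_zero (pow_ne_zero _ two_ne_zero) (powSumDes_pos r n).ne'
  have hle : r - digitSum 2 r + (n - 1) ≤ depth 2 n * r + padicValNat 2 (powSumDes r n) := by
    rw [← padicValNat.prime_pow (p := 2) (depth 2 n * r), ← padicValNat.mul
      (pow_ne_zero _ two_ne_zero) (powSumDes_pos r n).ne']
    exact (padicValNat_dvd_iff_le hprod).1 (by exact_mod_cast hdvd)
  have := digitSum_two_le r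
  rw [mul_comm (r : ℤ), ← Nat.cast_mul]
  omega

theorem stmt16 (r n : ℕ) (hr : 0 < r) (hn : 1 ≤ n) (hd : 0 < depth 2 n) :
    (r : ℤ) - digitSum 2 r + n - 1 - r * depth 2 n ≤
      padicValNat 2 (powSumDes r n) :=
  stmt16_general r n hd
end
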